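/- On the polynomial algebra C[x¹, x²] with Poisson bracket determined by {x¹, x²} = x², the Poisson homology in degree 0, i.e. the quotient of C[x¹,x²] by the span of all Poisson brackets {f, g}, is isomorphic to C[x¹] as a vector space. -/

import Mathlib

/-!
Every bracket is a multiple of `x²`, so it vanishes on the line `x² = 0`: restriction to that
line kills the bracket span. Conversely, `{x₁^(a+1) x₂^d, x₂} = (a+1) x₁^a x₂^(d+1)`, so in
characteristic zero every monomial divisible by `x²` is a bracket. Hence the bracket span is
exactly the kernel of the restriction `ℂ[x¹,x²] → ℂ[x¹]`, which is a left inverse of the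
inclusion `ℂ[x¹] ↪ ℂ[x¹,x²]`.
-/

open MvPolynomial

theorem LinearMap.bijective_mkQ_ker_comp_of_leftInverse {R V W : Type*} [Ring R]
    [AddCommGroup V] [Module R V] [AddCommGroup W] [Module R W]
    {i : V →ₗ[R] W} {r : W →ₗ[R] V} (h : Function.LeftInverse r i) :
    Function.Bijective fun v => (Submodule.Quotient.mk (i v) : W ⧸ LinearMap.ker r) := by
  have hr : Function.Surjective r := h.surjective
  convert (r.quotKerEquivOfSurjective hr).symm.bijective using 1
  funext v
  apply (r.quotKerEquivOfSurjective hr).injective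
  simp [h v]

namespace LogSymplecticSurface

section CommRing

variable (K : Type*) [CommRing K]

noncomputable def bracket (f g : MvPolynomial (Fin 2) K) : MvPolynomial (Fin 2) K :=
  X 1 * (pderiv 0 f * pderiv 1 g - pderiv 1 f * pderiv 0 g)

noncomputable def bracketSpan : Submodule K (MvPolynomial (Fin 2) K) :=
  Submodule.span K {z | ∃ f g, z = bracket K f g}

noncomputable def restrictToAxis : MvPolynomial (Fin 2) K →ₐ[K] Polynomial K :=
  aeval ![Polynomial.X, 0]

variable {K}

theorem restrictToAxis_comp_aeval_X_zero :
    (restrictToAxis K).comp (Polynomial.aeval (X 0)) = AlgHom.id K (Polynomial K) :=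
  Polynomial.algHom_ext (by simp [restrictToAxis])

theorem restrictToAxis_aeval_X_zero (q : Polynomial K) :
    restrictToAxis K (Polynomial.aeval (X 0) q) = q :=
  AlgHom.congr_fun restrictToAxis_comp_aeval_X_zero q

theorem restrictToAxis_bracket (f g : MvPolynomial (Fin 2) K) :
    restrictToAxis K (bracket K f g) = 0 := by
  simp [restrictToAxis, bracket]

theorem bracket_X_zero_pow_mul_X_one_pow_X_one (a d : ℕ) :
    bracket K (X 0 ^ (a + 1) * X 1 ^ d) (X 1) = (a + 1 : K) • (X 0 ^ a * X 1 ^ (d + 1)) := by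
  simp [bracket, Derivation.leibniz_pow, Algebra.smul_def, algebraMap_eq]
  ring

end CommRing

variable {K : Type*} [Field K] [CharZero K]

theorem X_zero_pow_mul_X_one_pow_succ_mem_bracketSpan (a d : ℕ) :
    X 0 ^ a * X 1 ^ (d + 1) ∈ bracketSpan K := by
  have hmem : bracket K (X 0 ^ (a + 1) * X 1 ^ d) (X 1) ∈ bracketSpan K :=
    Submodule.subset_span ⟨_, _, rfl⟩
  rw [bracket_X_zero_pow_mul_X_one_pow_X_one] at hmem
  simpa [Nat.cast_add_one_ne_zero] using (bracketSpan K).smul_mem ((a + 1 : K)⁻¹) hmem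

theorem sub_aeval_restrictToAxis_mem_bracketSpan (p : MvPolynomial (Fin 2) K) :
    p - Polynomial.aeval (X 0) (restrictToAxis K p) ∈ bracketSpan K := by
  induction p using MvPolynomial.induction_on' with
  | monomial u c =>
    have hu : monomial u c = C c * (X 0 ^ u 0 * X 1 ^ u 1) := by
      rw [monomial_eq, Finsupp.prod_fintype _ _ (by simp), Fin.prod_univ_two]
    cases h : u 1 with
    | zero => simp [hu, h, restrictToAxis]
    | succ d => simp [hu, h, restrictToAxis, C_mul', Submodule.smul_mem,
        X_zero_pow_mul_X_one_pow_succ_mem_bracketSpan]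
  | add p q hp hq =>
    simpa [add_sub_add_comm] using add_mem hp hq

theorem bracketSpan_eq_ker_restrictToAxis :
    bracketSpan K = LinearMap.ker (restrictToAxis K).toLinearMap := by
  apply le_antisymm
  · rw [bracketSpan, Submodule.span_le]
    rintro _ ⟨f, g, rfl⟩
    exact restrictToAxis_bracket f g
  · intro p (hp : restrictToAxis K p = 0)
    simpa [hp] using sub_aeval_restrictToAxis_mem_bracketSpan p

end LogSymplecticSurface

open LogSymplecticSurface in
/-- On `ℂ[x¹, x²]` with Poisson bracket `{f, g} = x² (∂₁f ∂₂g − ∂₂f ∂₁g)` (the unique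
biderivation with `{x¹, x²} = x²`), the composite `ℂ[x¹] ↪ ℂ[x¹,x²] → HP₀` onto the
zeroth Poisson homology `HP₀ = A / span{brackets}` is a bijection. -/
theorem hp0_of_log_symplectic_surface :
    Function.Bijective (fun q : Polynomial ℂ =>
      (Submodule.Quotient.mk
        (Polynomial.aeval (X 0 : MvPolynomial (Fin 2) ℂ) q) :
        MvPolynomial (Fin 2) ℂ ⧸ Submodule.span ℂ
          {z : MvPolynomial (Fin 2) ℂ | ∃ f g : MvPolynomial (Fin 2) ℂ,
            z = X 1 * (pderiv 0 f * pderiv 1 g - pderiv 1 f * pderiv 0 g)})) := by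
  change Function.Bijective fun q => (Submodule.Quotient.mk _ : _ ⧸ bracketSpan ℂ)
  rw [bracketSpan_eq_ker_restrictToAxis]
  have h : Function.LeftInverse (restrictToAxis ℂ).toLinearMap
      (Polynomial.aeval (R := ℂ) (X 0 : MvPolynomial (Fin 2) ℂ)).toLinearMap :=
    restrictToAxis_aeval_X_zero
  exact LinearMap.bijective_mkQ_ker_comp_of_leftInverse h
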